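/- Let ρ₁ = |ψ⟩⟨ψ| be pure and ρ₂ a density matrix, with largest eigenvalue λ₊ of ρ₁ − ρ₂ and corresponding unit eigenvector v. Then for the two-outcome POVM {|v⟩⟨v|, I − |v⟩⟨v|}, the bias Tr(|v⟩⟨v|(ρ₁ − ρ₂)) equals λ₊ = (1/2)‖ρ₁ − ρ₂‖₁; i.e., this measurement achieves the Holevo–Helstrom optimum. -/

import Mathlib

/-! Write `A = |ψ⟩⟨ψ| - ρ₂`. Since `|ψ⟩⟨ψ| - A = ρ₂ ⪰ 0`, the quadratic form of `A` is
nonpositive on `ψ^⊥`.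
Two orthonormal eigenvectors with positive eigenvalues would span a plane meeting `ψ^⊥`
nontrivially, on which the form is positive; hence `A` has at most one positive eigenvalue,
necessarily `λ₊`. As `Tr A = 0` the eigenvalues sum to zero, so `∑ |λᵢ| = 2 ∑ λᵢ⁺ = 2 λ₊`.
The bias itself is `⟨v, A v⟩ = λ₊`. -/

open Matrix BigOperators ComplexOrder

lemma Fintype.sum_abs_eq_two_mul_of_sum_eq_zero {ι : Type*} [Fintype ι] {f : ι → ℝ}
    (hsum : ∑ i, f i = 0) (hpos : ∀ i j, 0 < f i → 0 < f j → i = j) {k : ι}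
    (hk : ∀ i, f i ≤ f k) : ∑ i, |f i| = 2 * f k := by
  have hk₀ : 0 ≤ f k := by
    by_contra! h
    have := Finset.sum_neg (fun i _ ↦ (hk i).trans_lt h) ⟨k, Finset.mem_univ k⟩
    linarith
  calc ∑ i, |f i| = ∑ i, (|f i| + f i) := by rw [Finset.sum_add_distrib, hsum, add_zero]
    _ = ∑ i, 2 • (f i)⁺ := by simp_rw [abs_add_eq_two_nsmul_posPart]
    _ = 2 • (f k)⁺ := by
        refine Finset.sum_eq_single k (fun i _ hik ↦ ?_) (by simp)
        rw [posPart_eq_zero.mpr (not_lt.mp fun hi ↦ hik (hpos i k hi (hi.trans_le (hk i)))),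
          smul_zero]
    _ = 2 * f k := by rw [posPart_of_nonneg hk₀, two_nsmul, two_mul]

namespace Matrix

lemma trace_vecMulVec_mul {n R : Type*} [Fintype n] [CommSemiring R] (a b : n → R)
    (M : Matrix n n R) : (vecMulVec a b * M).trace = b ⬝ᵥ (M *ᵥ a) := by
  rw [trace_mul_comm, mul_vecMulVec, trace_vecMulVec, dotProduct_comm]

lemma exists_dotProduct_add_smul_eq_zero {n R : Type*} [Fintype n] [CommRing R] [Nontrivial R]
    (ψ u w : n → R) : ∃ a b : R, (a ≠ 0 ∨ b ≠ 0) ∧ ψ ⬝ᵥ (a • u + b • w) = 0 := by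
  by_cases hu : ψ ⬝ᵥ u = 0
  · exact ⟨1, 0, .inl one_ne_zero, by simp [hu]⟩
  · refine ⟨ψ ⬝ᵥ w, -(ψ ⬝ᵥ u), .inr (neg_ne_zero.mpr hu), ?_⟩
    simp only [dotProduct_add, dotProduct_smul, smul_eq_mul]
    ring

variable {𝕜 n : Type*} [RCLike 𝕜] [Fintype n] {A : Matrix n n 𝕜}

lemma star_dotProduct_mulVec_nonpos_of_posSemidef_vecMulVec_sub {ψ : n → 𝕜}
    (hle : (vecMulVec ψ (star ψ) - A).PosSemidef) {w : n → 𝕜} (hw : star ψ ⬝ᵥ w = 0) :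
    star w ⬝ᵥ (A *ᵥ w) ≤ 0 := by
  have := hle.dotProduct_mulVec_nonneg w
  rwa [sub_mulVec, dotProduct_sub, vecMulVec_mulVec, hw, MulOpposite.op_zero, zero_smul,
    dotProduct_zero, zero_sub, neg_nonneg] at this

namespace IsHermitian

variable [DecidableEq n] (hA : A.IsHermitian)

lemma star_eigenvectorBasis_dotProduct (i j : n) :
    star ⇑(hA.eigenvectorBasis i) ⬝ᵥ ⇑(hA.eigenvectorBasis j) = if i = j then 1 else 0 := by
  rw [dotProduct_comm, ← EuclideanSpace.inner_eq_star_dotProduct,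
    orthonormal_iff_ite.mp hA.eigenvectorBasis.orthonormal]

lemma star_dotProduct_mulVec_eigenvectorBasis_add {i j : n} (hij : i ≠ j) (a b : 𝕜) :
    star (a • ⇑(hA.eigenvectorBasis i) + b • ⇑(hA.eigenvectorBasis j)) ⬝ᵥ
        (A *ᵥ (a • ⇑(hA.eigenvectorBasis i) + b • ⇑(hA.eigenvectorBasis j))) =
      ((hA.eigenvalues i * ‖a‖ ^ 2 + hA.eigenvalues j * ‖b‖ ^ 2 : ℝ) : 𝕜) := by
  simp only [mulVec_add, mulVec_smul, mulVec_eigenvectorBasis, star_add, star_smul,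
    add_dotProduct, dotProduct_add, smul_dotProduct, dotProduct_smul,
    star_eigenvectorBasis_dotProduct, hij, hij.symm, if_true, if_false, smul_eq_mul,
    RCLike.real_smul_eq_coe_mul]
  push_cast
  rw [← RCLike.mul_conj, ← RCLike.mul_conj, ← RCLike.star_def]
  ring

lemma exists_eigenvalues_eq_of_mulVec_eq_smul {v : n → 𝕜} (hv : v ≠ 0) {μ : ℝ}
    (h : A *ᵥ v = (μ : 𝕜) • v) : ∃ k, hA.eigenvalues k = μ := by
  have hμ : (μ : 𝕜) ∈ spectrum 𝕜 A := by
    rw [← spectrum_toLin', ← Module.End.hasEigenvalue_iff_mem_spectrum]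
    exact Module.End.hasEigenvalue_of_hasEigenvector
      ⟨by rwa [Module.End.mem_eigenspace_iff, toLin'_apply], hv⟩
  obtain ⟨μ', ⟨k, rfl⟩, hk⟩ := hA.spectrum_eq_image_range ▸ hμ
  exact ⟨k, RCLike.ofReal_injective hk⟩

lemma eq_of_eigenvalues_pos_of_posSemidef_vecMulVec_sub {ψ : n → 𝕜}
    (hle : (vecMulVec ψ (star ψ) - A).PosSemidef) {i j : n}
    (hi : 0 < hA.eigenvalues i) (hj : 0 < hA.eigenvalues j) : i = j := by
  by_contra hij
  obtain ⟨a, b, hab, hψ⟩ := exists_dotProduct_add_smul_eq_zero (star ψ)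
    ⇑(hA.eigenvectorBasis i) ⇑(hA.eigenvectorBasis j)
  have hnonpos := star_dotProduct_mulVec_nonpos_of_posSemidef_vecMulVec_sub hle hψ
  rw [hA.star_dotProduct_mulVec_eigenvectorBasis_add hij, RCLike.ofReal_nonpos] at hnonpos
  have hpos : 0 < hA.eigenvalues i * ‖a‖ ^ 2 + hA.eigenvalues j * ‖b‖ ^ 2 := by
    rcases hab with ha | hb
    · exact add_pos_of_pos_of_nonneg (by positivity) (by positivity)
    · exact add_pos_of_nonneg_of_pos (by positivity) (by positivity)
  exact hnonpos.not_gt hpos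

end IsHermitian

end Matrix

theorem stmt11 {n : ℕ} (ρ₂ : Matrix (Fin n) (Fin n) ℂ)
    (hρ₂ : ρ₂.PosSemidef) (htr : ρ₂.trace = 1)
    (ψ : Fin n → ℂ) (hψ : star ψ ⬝ᵥ ψ = 1)
    (hA : (Matrix.vecMulVec ψ (star ψ) - ρ₂).IsHermitian)
    (lamPlus : ℝ) (v : Fin n → ℂ) (hv : star v ⬝ᵥ v = 1)
    (heig : (Matrix.vecMulVec ψ (star ψ) - ρ₂).mulVec v = (lamPlus : ℂ) • v)
    (hmax : ∀ i, hA.eigenvalues i ≤ lamPlus) :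
    (Matrix.vecMulVec v (star v) * (Matrix.vecMulVec ψ (star ψ) - ρ₂)).trace =
        (lamPlus : ℂ) ∧
      lamPlus = (1 / 2) * ∑ i, |hA.eigenvalues i| := by
  refine ⟨by rw [trace_vecMulVec_mul, heig, dotProduct_smul, hv, smul_eq_mul, mul_one], ?_⟩
  have hsum : ∑ i, hA.eigenvalues i = 0 := by
    have := hA.trace_eq_sum_eigenvalues
    rwa [trace_sub, trace_vecMulVec, dotProduct_comm, hψ, htr, sub_self, ← RCLike.ofReal_sum,
      eq_comm, RCLike.ofReal_eq_zero] at this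
  have hle : (vecMulVec ψ (star ψ) - (vecMulVec ψ (star ψ) - ρ₂)).PosSemidef := by
    rwa [sub_sub_cancel]
  obtain ⟨k, rfl⟩ := hA.exists_eigenvalues_eq_of_mulVec_eq_smul
    (by rintro rfl; simp at hv) heig
  rw [Fintype.sum_abs_eq_two_mul_of_sum_eq_zero hsum
    (fun _ _ ↦ hA.eq_of_eigenvalues_pos_of_posSemidef_vecMulVec_sub hle) hmax]
  ring
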